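/- arXiv:1804.10958 — 2 statements merged into one kernel-verified Lean document; each statement's English description precedes it below -/
import Mathlib

section
/- Let H : ℝ^{2n} → ℝ be smooth and let F_1,...,F_l : A → ℝ (A ⊆ ℝ^{2n} open) be independent, isotropic first integrals of H; set r := 2n−l. Then: (i) for every x_0 ∈ A there exist r coordinate indices i_1 < ... < i_r of ℝ^{2n} such that, with Π : ℝ^{2n} → ℝ^r the projection onto those coordinates, the Jacobian of (Π,F) : A → ℝ^r × ℝ^l at x_0 is invertible; and (ii) whenever Π is such a coordinate projection and (Π,F) restricts to a diffeomorphism from an open set U ⊆ A onto an open set W ⊆ ℝ^r × ℝ^l with inverse Σ : W → U, each partial map σ_λ := Σ(·,λ) (defined on the open slice {x : (x,λ) ∈ W}) satisfies Π ∘ σ_λ = id, ∇H(σ_λ(x)) ∈ Im(J·Dσ_λ(x)), and Dσ_λ(x)ᵀ·J·Dσ_λ(x) = 0, i.e. Σ is a generalized local complete solution of the Hamilton–Jacobi equation for H. -/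
open Matrix

noncomputable def mjac {ι κ : Type*} [Fintype ι] [DecidableEq ι] [Fintype κ]
    (F : (ι → ℝ) → (κ → ℝ)) (x : ι → ℝ) : Matrix κ ι ℝ :=
  Matrix.of fun i j => fderiv ℝ F x (Pi.single j 1) i

noncomputable def mgrad {ι : Type*} [Fintype ι] [DecidableEq ι]
    (f : (ι → ℝ) → ℝ) (x : ι → ℝ) : ι → ℝ :=
  fun i => fderiv ℝ f x (Pi.single i 1)

def symJ (n : ℕ) : Matrix (Fin n ⊕ Fin n) (Fin n ⊕ Fin n) ℝ :=
  Matrix.fromBlocks 0 1 (-1) 0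

noncomputable def poisson {n : ℕ} (f g : ((Fin n ⊕ Fin n) → ℝ) → ℝ)
    (x : (Fin n ⊕ Fin n) → ℝ) : ℝ :=
  mgrad f x ⬝ᵥ (symJ n).mulVec (mgrad g x)

lemma mjac_mulVec {ι κ : Type*} [Fintype ι] [DecidableEq ι] [Fintype κ]
    (G : (ι → ℝ) → (κ → ℝ)) (x : ι → ℝ) (v : ι → ℝ) :
    (mjac G x).mulVec v = fderiv ℝ G x v := by
  funext k
  have hv : v = ∑ j, v j • (Pi.single j 1 : ι → ℝ) := by
    ext k; simp [Pi.single_apply]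
  conv_rhs => rw [hv]
  rw [map_sum]
  simp only [ContinuousLinearMap.map_smul, Finset.sum_apply, Pi.smul_apply, smul_eq_mul]
  simp only [mjac, Matrix.mulVec, dotProduct, of_apply]
  exact Finset.sum_congr rfl fun j _ => mul_comm _ _

lemma mjac_comp {ι κ μ : Type*} [Fintype ι] [DecidableEq ι] [Fintype κ] [DecidableEq κ]
    [Fintype μ] {f : (ι → ℝ) → (κ → ℝ)} {g : (κ → ℝ) → (μ → ℝ)} {x : ι → ℝ}
    (hg : DifferentiableAt ℝ g (f x)) (hf : DifferentiableAt ℝ f x) :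
    mjac (fun y => g (f y)) x = mjac g (f x) * mjac f x := by
  ext k j
  have h : fderiv ℝ (g ∘ f) x = (fderiv ℝ g (f x)).comp (fderiv ℝ f x) := fderiv_comp x hg hf
  have h2 := congrFun (mjac_mulVec g (f x) (fderiv ℝ f x (Pi.single j 1))) k
  simp only [mjac, of_apply, Matrix.mul_apply]
  show fderiv ℝ (g ∘ f) x (Pi.single j 1) k = _
  rw [h]
  simp only [ContinuousLinearMap.comp_apply]
  rw [← h2]
  simp [Matrix.mulVec, dotProduct, mjac]

lemma mjac_rows {ι κ : Type*} [Fintype ι] [DecidableEq ι] [Fintype κ]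
    (G : Π _ : κ, (ι → ℝ) → ℝ) (x : ι → ℝ) (h : ∀ k, DifferentiableAt ℝ (G k) x) :
    mjac (fun y k => G k y) x = Matrix.of (fun k => mgrad (G k) x) := by
  ext k j
  simp only [mjac, of_apply, mgrad]
  rw [fderiv_pi h]
  simp


lemma symJ_mul_symJ (n : ℕ) : symJ n * symJ n = -1 := by
  simp only [symJ, Matrix.fromBlocks_multiply]
  ext (i|i) (j|j) <;> simp [Matrix.one_apply, eq_comm]

lemma symJ_mulVec_symJ_mulVec {n : ℕ} (g : (Fin n ⊕ Fin n) → ℝ) :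
    (symJ n).mulVec ((symJ n).mulVec g) = -g := by
  rw [Matrix.mulVec_mulVec, symJ_mul_symJ, Matrix.neg_mulVec, Matrix.one_mulVec]

lemma mul_mul_transpose_apply {p q : Type*} [Fintype p] [Fintype q]
    (M : Matrix q p ℝ) (B : Matrix p p ℝ) (i j : q) :
    (M * B * Mᵀ) i j = M i ⬝ᵥ B.mulVec (M j) := by
  simp only [Matrix.mul_apply, dotProduct, Matrix.mulVec, transpose_apply,
    Finset.sum_mul, Finset.mul_sum]
  rw [Finset.sum_comm]
  exact Finset.sum_congr rfl fun k _ => Finset.sum_congr rfl fun m _ => by ring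

lemma transpose_mul_mul_apply {p q : Type*} [Fintype p] [Fintype q]
    (A : Matrix p q ℝ) (B : Matrix p p ℝ) (i j : q) :
    (Aᵀ * B * A) i j = (fun k => A k i) ⬝ᵥ B.mulVec (fun k => A k j) := by
  simp only [Matrix.mul_apply, dotProduct, Matrix.mulVec, transpose_apply,
    Finset.sum_mul, Finset.mul_sum]
  rw [Finset.sum_comm]
  exact Finset.sum_congr rfl fun k _ => Finset.sum_congr rfl fun m _ => by ring

lemma rank_le_two_n {n l : ℕ} (M : Matrix (Fin l) (Fin n ⊕ Fin n) ℝ)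
    (hrank : M.rank = l) : l ≤ 2 * n := by
  have := M.rank_le_card_width
  simp [Fintype.card_sum] at this
  omega

lemma ker_finrank {n l : ℕ} (M : Matrix (Fin l) (Fin n ⊕ Fin n) ℝ) (hrank : M.rank = l) :
    Module.finrank ℝ (LinearMap.ker M.mulVecLin) = 2 * n - l := by
  have h := LinearMap.finrank_range_add_finrank_ker M.mulVecLin
  rw [show Module.finrank ℝ (LinearMap.range M.mulVecLin) = M.rank from rfl, hrank] at h
  have h2 : Module.finrank ℝ ((Fin n ⊕ Fin n) → ℝ) = 2 * n := by
    simp [Module.finrank_pi, Fintype.card_sum]; ring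
  rw [h2] at h
  omega

lemma transpose_mulVecLin_injective {n l : ℕ} (M : Matrix (Fin l) (Fin n ⊕ Fin n) ℝ)
    (hrank : M.rank = l) : Function.Injective Mᵀ.mulVecLin := by
  rw [← LinearMap.ker_eq_bot]
  have h := LinearMap.finrank_range_add_finrank_ker Mᵀ.mulVecLin
  rw [show Module.finrank ℝ (LinearMap.range Mᵀ.mulVecLin) = Mᵀ.rank from rfl,
    Matrix.rank_transpose, hrank] at h
  have h2 : Module.finrank ℝ (Fin l → ℝ) = l := by simp
  rw [h2] at h
  have : Module.finrank ℝ (LinearMap.ker Mᵀ.mulVecLin) = 0 := by omega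
  exact Submodule.finrank_eq_zero.mp this

lemma symJ_mulVec_injective {n : ℕ} : Function.Injective fun v => (symJ n).mulVec v := by
  intro v w h
  have := congrArg ((symJ n).mulVec) h
  rwa [symJ_mulVec_symJ_mulVec, symJ_mulVec_symJ_mulVec, neg_inj] at this

lemma ker_isotropic {n l : ℕ} (M : Matrix (Fin l) (Fin n ⊕ Fin n) ℝ)
    (hrank : M.rank = l)
    (hkerP : Module.finrank ℝ (LinearMap.ker (Matrix.mulVecLin (M * symJ n * Mᵀ))) = 2 * n - l) :
    ∀ v w, M.mulVec v = 0 → M.mulVec w = 0 → v ⬝ᵥ (symJ n).mulVec w = 0 := by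
  intro v w hv hw
  set ψ := (symJ n * Mᵀ).mulVecLin with hψ
  have hψinj : Function.Injective ψ := by
    intro a b h
    simp only [hψ, Matrix.mulVecLin_apply, ← Matrix.mulVec_mulVec] at h
    exact transpose_mulVecLin_injective M hrank (symJ_mulVec_injective h)
  have hsub : Submodule.map ψ (LinearMap.ker (M * symJ n * Mᵀ).mulVecLin)
      ≤ LinearMap.ker M.mulVecLin := by
    rintro _ ⟨c, hc, rfl⟩
    simp only [LinearMap.mem_ker, hψ, Matrix.mulVecLin_apply] at hc ⊢
    rw [Matrix.mulVec_mulVec, ← Matrix.mul_assoc]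
    exact hc
  have hmap : Module.finrank ℝ
      (Submodule.map ψ (LinearMap.ker (M * symJ n * Mᵀ).mulVecLin)) = 2 * n - l := by
    rw [← hkerP]
    exact (Submodule.equivMapOfInjective ψ hψinj _).symm.finrank_eq
  have heq : Submodule.map ψ (LinearMap.ker (M * symJ n * Mᵀ).mulVecLin)
      = LinearMap.ker M.mulVecLin := by
    apply Submodule.eq_of_le_of_finrank_le hsub
    rw [hmap, ker_finrank M hrank]
  have hwmem : w ∈ Submodule.map ψ (LinearMap.ker (M * symJ n * Mᵀ).mulVecLin) := by
    rw [heq]; exact LinearMap.mem_ker.mpr (by simpa using hw)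
  obtain ⟨c, _, hc⟩ := hwmem
  have hcw : w = (symJ n).mulVec (Mᵀ.mulVec c) := by
    rw [← hc, hψ, Matrix.mulVecLin_apply, ← Matrix.mulVec_mulVec]
  rw [hcw, symJ_mulVec_symJ_mulVec, dotProduct_neg, Matrix.dotProduct_mulVec,
    Matrix.vecMul_transpose, hv]
  simp

lemma single_one_injective {β : Type*} [DecidableEq β] :
    Function.Injective (fun k : β => (Pi.single k 1 : β → ℝ)) := by
  intro k k' h
  have := congrFun h k
  by_contra hkk
  simp [Pi.single_apply, hkk] at this

lemma mulVecLin_bijective_of_rows_span {p q : Type*} [Fintype p] [Fintype q] [DecidableEq q]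
    (N : Matrix p q ℝ) (hspan : Submodule.span ℝ (Set.range (fun m => (N m : q → ℝ))) = ⊤)
    (hcard : Fintype.card p = Fintype.card q) :
    Function.Bijective N.mulVecLin := by
  have hinj : Function.Injective N.mulVecLin := by
    rw [← LinearMap.ker_eq_bot]
    apply LinearMap.ker_eq_bot'.mpr
    intro v hv
    have hrow : ∀ w ∈ Submodule.span ℝ (Set.range (fun m => (N m : q → ℝ))), w ⬝ᵥ v = 0 := by
      intro w hw
      induction hw using Submodule.span_induction with
      | mem w hwmem =>
        obtain ⟨m, rfl⟩ := hwmem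
        exact congrFun hv m
      | zero => exact zero_dotProduct v
      | add a b _ _ ha hb => rw [add_dotProduct, ha, hb, add_zero]
      | smul c a _ ha => rw [smul_dotProduct, ha, smul_zero]
    funext k
    have hk := hrow (Pi.single k 1) (by rw [hspan]; trivial)
    simpa [dotProduct, Pi.single_apply] using hk
  refine ⟨hinj, ?_⟩
  rw [← LinearMap.range_eq_top]
  apply Submodule.eq_top_of_finrank_eq
  have h := LinearMap.finrank_range_add_finrank_ker N.mulVecLin
  rw [LinearMap.ker_eq_bot.mpr hinj] at h
  simp only [finrank_bot, add_zero, Module.finrank_pi] at h ⊢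
  rw [h]; exact hcard.symm

lemma part_one {n l : ℕ}
    (A : Set ((Fin n ⊕ Fin n) → ℝ)) (hA : IsOpen A)
    (F : Fin l → ((Fin n ⊕ Fin n) → ℝ) → ℝ)
    (hF : ∀ i, ContDiffOn ℝ (⊤ : ℕ∞) (F i) A)
    (hind : ∀ x ∈ A, (mjac (fun y i => F i y) x).rank = l)
    (x₀ : (Fin n ⊕ Fin n) → ℝ) (hx₀ : x₀ ∈ A) :
    ∃ ι : Fin (2 * n - l) → (Fin n ⊕ Fin n), Function.Injective ι ∧
      Function.Bijective (Matrix.mulVecLin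
        (mjac (fun y => Sum.elim (fun i : Fin (2 * n - l) => y (ι i)) (fun j => F j y)) x₀)) := by
  classical
  have hdF : ∀ j, DifferentiableAt ℝ (F j) x₀ := fun j =>
    ((hF j).differentiableOn (by simp)).differentiableAt (hA.mem_nhds hx₀)
  set M : Matrix (Fin l) (Fin n ⊕ Fin n) ℝ := mjac (fun y i => F i y) x₀ with hM
  have hrank : M.rank = l := hind x₀ hx₀
  have hl : l ≤ 2 * n := rank_le_two_n M hrank
  set rows : Fin l → ((Fin n ⊕ Fin n) → ℝ) := fun j => M j with hrows
  have hli : LinearIndependent ℝ rows := by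
    rw [linearIndependent_iff_card_eq_finrank_span]
    have h2 := M.rank_eq_finrank_span_row
    rw [hrank] at h2
    rw [Fintype.card_fin]; exact h2
  set s : Set ((Fin n ⊕ Fin n) → ℝ) := Set.range rows with hs
  set e : (Fin n ⊕ Fin n) → ((Fin n ⊕ Fin n) → ℝ) := fun k => Pi.single k 1 with he
  set t : Set ((Fin n ⊕ Fin n) → ℝ) := s ∪ Set.range e with ht
  have hst : s ⊆ t := Set.subset_union_left
  obtain ⟨b, hbt, hsb, htb, hbli⟩ := exists_linearIndepOn_id_extension
    ((linearIndepOn_id_range_iff hli.injective).mpr hli) hst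
  have hbspan : Submodule.span ℝ b = ⊤ := by
    rw [eq_top_iff]
    intro v _
    have hv : v = ∑ k, v k • (Pi.single k 1 : (Fin n ⊕ Fin n) → ℝ) := by
      ext k; simp [Pi.single_apply]
    rw [hv]
    exact Submodule.sum_mem _ fun k _ => Submodule.smul_mem _ _ (htb (Or.inr ⟨k, rfl⟩))
  let B : Module.Basis b ℝ ((Fin n ⊕ Fin n) → ℝ) := Module.Basis.mk (v := (Subtype.val : b → ((Fin n ⊕ Fin n) → ℝ))) (show LinearIndependent ℝ (Subtype.val : b → ((Fin n ⊕ Fin n) → ℝ)) from hbli) (by rw [Subtype.range_coe, hbspan])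
  haveI : Fintype b := FiniteDimensional.fintypeBasisIndex B
  have hcardb : b.ncard = 2 * n := by
    rw [Set.ncard_eq_toFinset_card', Set.toFinset_card]
    have h3 := Module.finrank_eq_card_basis B
    simp only [Module.finrank_pi, Fintype.card_sum, Fintype.card_fin] at h3
    omega
  have hcards : s.ncard = l := by
    rw [hs, ← Nat.card_coe_set_eq, Nat.card_range_of_injective hli.injective]
    simp
  have hbfin : b.Finite := b.toFinite
  have hdiffcard : (b \ s).ncard = 2 * n - l := by
    rw [Set.ncard_diff hsb s.toFinite, hcardb, hcards]
  have hdiffsub : b \ s ⊆ Set.range e := by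
    rintro x ⟨hxb, hxs⟩
    rcases hbt hxb with h | h
    · exact absurd h hxs
    · exact h
  set K' : Set (Fin n ⊕ Fin n) := e ⁻¹' (b \ s) with hK'
  have himg : e '' K' = b \ s := Set.image_preimage_eq_of_subset hdiffsub
  have hK'card : K'.ncard = 2 * n - l := by
    rw [← hdiffcard, ← himg, Set.ncard_image_of_injective _ single_one_injective]
  haveI : Fintype K' := (K'.toFinite).fintype
  have hK'c : Fintype.card K' = 2 * n - l := by
    rw [← Nat.card_eq_fintype_card, Nat.card_coe_set_eq, hK'card]
  let eqv : Fin (2 * n - l) ≃ K' := (Fintype.equivFinOfCardEq hK'c).symm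
  refine ⟨fun i => (eqv i : Fin n ⊕ Fin n), Subtype.val_injective.comp eqv.injective, ?_⟩
  set ι : Fin (2 * n - l) → (Fin n ⊕ Fin n) := fun i => (eqv i : Fin n ⊕ Fin n) with hiota
  have hι_range : Set.range (fun i => e (ι i)) = b \ s := by
    rw [← himg]
    apply Set.eq_of_subset_of_subset
    · rintro _ ⟨i, rfl⟩; exact ⟨ι i, (eqv i).2, rfl⟩
    · rintro _ ⟨k, hk, rfl⟩
      exact ⟨eqv.symm ⟨k, hk⟩, by simp [ι]⟩
  set G' : (Fin (2 * n - l) ⊕ Fin l) → ((Fin n ⊕ Fin n) → ℝ) → ℝ :=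
    Sum.elim (fun i y => y (ι i)) (fun j y => F j y) with hG'
  have hGeq : (fun y => Sum.elim (fun i : Fin (2 * n - l) => y (ι i)) (fun j => F j y))
      = fun y k => G' k y := by
    funext y k; cases k <;> rfl
  have hG'diff : ∀ k, DifferentiableAt ℝ (G' k) x₀ := by
    rintro (i | j)
    · exact (ContinuousLinearMap.proj (ι i) :
        ((Fin n ⊕ Fin n) → ℝ) →L[ℝ] ℝ).differentiableAt
    · exact hdF j
  have hN : mjac (fun y k => G' k y) x₀ = Matrix.of (fun k => mgrad (G' k) x₀) :=
    mjac_rows G' x₀ hG'diff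
  have hrow_inl : ∀ i, mgrad (G' (Sum.inl i)) x₀ = e (ι i) := by
    intro i
    funext k
    have hfd : fderiv ℝ (fun y : (Fin n ⊕ Fin n) → ℝ => y (ι i)) x₀
        = (ContinuousLinearMap.proj (ι i) : ((Fin n ⊕ Fin n) → ℝ) →L[ℝ] ℝ) :=
      (ContinuousLinearMap.proj (ι i) : ((Fin n ⊕ Fin n) → ℝ) →L[ℝ] ℝ).fderiv
    simp only [mgrad, hG', Sum.elim_inl]
    rw [hfd]
    simp [he, Pi.single_apply, eq_comm]
  have hrow_inr : ∀ j, mgrad (G' (Sum.inr j)) x₀ = rows j := by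
    intro j
    funext k
    simp only [mgrad, hG', Sum.elim_inr, hrows, hM, mjac, of_apply]
    rw [fderiv_pi (fun i => hdF i)]
    simp
  rw [hGeq, hN]
  apply mulVecLin_bijective_of_rows_span
  · have hrange : Set.range (fun m => (Matrix.of (fun k => mgrad (G' k) x₀) m :
        (Fin n ⊕ Fin n) → ℝ)) = b := by
      have h4 : (fun m : Fin (2 * n - l) ⊕ Fin l =>
          (Matrix.of (fun k => mgrad (G' k) x₀) m : (Fin n ⊕ Fin n) → ℝ))
          = Sum.elim (fun i => e (ι i)) rows := by
        funext m; cases m with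
        | inl i => exact hrow_inl i
        | inr j => exact hrow_inr j
      rw [h4, Set.Sum.elim_range, hι_range, ← hs, Set.diff_union_of_subset hsb]
    rw [hrange, hbspan]
  · simp only [Fintype.card_sum, Fintype.card_fin]
    omega


/-- From `l` independent isotropic first integrals of `H` one obtains, near any point,
a transverse coordinate projection `Π` such that `(Π,F)` has invertible Jacobian, and any
local inverse `Σ` of such a `(Π,F)` is a generalized local complete solution of the
Hamilton–Jacobi equation for `H`. -/
theorem isotropic_first_integrals_give_complete_solution
    (n l : ℕ)
    (H : ((Fin n ⊕ Fin n) → ℝ) → ℝ) (hH : ContDiff ℝ (⊤ : ℕ∞) H)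
    (A : Set ((Fin n ⊕ Fin n) → ℝ)) (hA : IsOpen A)
    (F : Fin l → ((Fin n ⊕ Fin n) → ℝ) → ℝ)
    (hF : ∀ i, ContDiffOn ℝ (⊤ : ℕ∞) (F i) A)
    (hind : ∀ x ∈ A, (mjac (fun y i => F i y) x).rank = l)
    (hfi : ∀ i, ∀ x ∈ A, poisson (F i) H x = 0)
    (hiso : ∀ x ∈ A, Module.finrank ℝ (LinearMap.ker
      (Matrix.mulVecLin (Matrix.of fun i j : Fin l => poisson (F i) (F j) x))) = 2 * n - l) :
    -- (i) existence of a transverse coordinate projection at every point of `A`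
    (∀ x₀ ∈ A, ∃ ι : Fin (2 * n - l) → (Fin n ⊕ Fin n), Function.Injective ι ∧
      Function.Bijective (Matrix.mulVecLin
        (mjac (fun y => Sum.elim (fun i : Fin (2 * n - l) => y (ι i)) (fun j => F j y)) x₀))) ∧
    -- (ii) any local inverse of such a `(Π,F)` is a generalized local complete solution
    (∀ (ι : Fin (2 * n - l) → (Fin n ⊕ Fin n)), Function.Injective ι →
      ∀ (U : Set ((Fin n ⊕ Fin n) → ℝ))
        (W : Set ((Fin (2 * n - l) → ℝ) × (Fin l → ℝ)))
        (S : (Fin (2 * n - l) → ℝ) × (Fin l → ℝ) → (Fin n ⊕ Fin n) → ℝ),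
        IsOpen U → U ⊆ A → IsOpen W →
        (∀ y ∈ U, ((fun i => y (ι i)), (fun j => F j y)) ∈ W) →
        (∀ y ∈ U, S ((fun i => y (ι i)), (fun j => F j y)) = y) →
        (∀ w ∈ W, S w ∈ U ∧ ((fun i => S w (ι i)), (fun j => F j (S w))) = w) →
        ContDiffOn ℝ (⊤ : ℕ∞) S W →
        ∀ x lam, (x, lam) ∈ W →
          (∀ i, S (x, lam) (ι i) = x i) ∧
          mgrad H (S (x, lam)) ∈ LinearMap.range
            (Matrix.mulVecLin (symJ n * mjac (fun y => S (y, lam)) x)) ∧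
          (mjac (fun y => S (y, lam)) x)ᵀ * symJ n * mjac (fun y => S (y, lam)) x = 0) := by
  constructor
  · exact fun x₀ hx₀ => part_one A hA F hF hind x₀ hx₀
  intro ι hι U W S hU hUA hW hUW hSU hSW hS x lam hxl
  classical
  set y₀ : (Fin n ⊕ Fin n) → ℝ := S (x, lam) with hy₀
  have hy₀U : y₀ ∈ U := (hSW _ hxl).1
  have hy₀A : y₀ ∈ A := hUA hy₀U
  -- part (a)
  have ha : ∀ i, S (x, lam) (ι i) = x i := by
    intro i
    have := congrArg Prod.fst (hSW _ hxl).2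
    exact congrFun this i
  -- the slice set
  set V : Set (Fin (2 * n - l) → ℝ) := {y | (y, lam) ∈ W} with hVdef
  have hV : IsOpen V := hW.preimage (continuous_id.prodMk continuous_const)
  have hxV : x ∈ V := hxl
  -- differentiability
  set σ : (Fin (2 * n - l) → ℝ) → ((Fin n ⊕ Fin n) → ℝ) := fun y => S (y, lam) with hσdef
  have hSd : DifferentiableAt ℝ S (x, lam) :=
    ((hS.differentiableOn (by simp)).differentiableAt (hW.mem_nhds hxl))
  have hpair : DifferentiableAt ℝ (fun y : Fin (2 * n - l) → ℝ => (y, lam)) x :=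
    differentiableAt_id.prodMk (differentiableAt_const _)
  have hσd : DifferentiableAt ℝ σ x := hSd.comp x hpair
  have hdF : ∀ j, DifferentiableAt ℝ (F j) y₀ := fun j =>
    ((hF j).differentiableOn (by simp)).differentiableAt (hA.mem_nhds hy₀A)
  set Fvec : ((Fin n ⊕ Fin n) → ℝ) → (Fin l → ℝ) := fun y j => F j y with hFvec
  have hFd : DifferentiableAt ℝ Fvec y₀ := differentiableAt_pi.mpr hdF
  set M : Matrix (Fin l) (Fin n ⊕ Fin n) ℝ := mjac Fvec y₀ with hM
  set Dσ : Matrix (Fin n ⊕ Fin n) (Fin (2 * n - l)) ℝ := mjac σ x with hDσ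
  have hMrank : M.rank = l := hind y₀ hy₀A
  have hMrows : M = Matrix.of (fun j => mgrad (F j) y₀) := mjac_rows F y₀ hdF
  -- chain rule : M * Dσ = 0
  have hMDσ : M * Dσ = 0 := by
    rw [← mjac_comp hFd hσd]
    have hev : (fun y => Fvec (σ y)) =ᶠ[nhds x] (fun _ => lam) := by
      filter_upwards [hV.mem_nhds hxV] with y hy
      exact congrArg Prod.snd (hSW _ hy).2
    ext k j
    simp only [mjac, of_apply]
    rw [hev.fderiv_eq, fderiv_const_apply]
    simp
  -- chain rule : P * Dσ = 1
  set Pi' : ((Fin n ⊕ Fin n) → ℝ) → (Fin (2 * n - l) → ℝ) := fun y i => y (ι i) with hPi'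
  have hPid : DifferentiableAt ℝ Pi' (σ x) := differentiableAt_pi.mpr fun i =>
    (ContinuousLinearMap.proj (ι i) : ((Fin n ⊕ Fin n) → ℝ) →L[ℝ] ℝ).differentiableAt
  have hPDσ : mjac Pi' (σ x) * Dσ = 1 := by
    rw [← mjac_comp hPid hσd]
    have hev : (fun y => Pi' (σ y)) =ᶠ[nhds x] id := by
      filter_upwards [hV.mem_nhds hxV] with y hy
      exact congrArg Prod.fst (hSW _ hy).2
    ext i i'
    simp only [mjac, of_apply]
    rw [hev.fderiv_eq, fderiv_id]
    simp [Matrix.one_apply, Pi.single_apply, eq_comm]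
  have hDσinj : Function.Injective Dσ.mulVecLin := by
    intro v w h
    simp only [Matrix.mulVecLin_apply] at h
    have h2 := congrArg ((mjac Pi' (σ x)).mulVec) h
    rwa [Matrix.mulVec_mulVec, Matrix.mulVec_mulVec, hPDσ, Matrix.one_mulVec,
      Matrix.one_mulVec] at h2
  -- kernel equality
  have hrange_le : LinearMap.range Dσ.mulVecLin ≤ LinearMap.ker M.mulVecLin := by
    rintro _ ⟨v, rfl⟩
    simp only [LinearMap.mem_ker, Matrix.mulVecLin_apply, Matrix.mulVec_mulVec, hMDσ,
      Matrix.zero_mulVec]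
  have hrange_fin : Module.finrank ℝ (LinearMap.range Dσ.mulVecLin) = 2 * n - l := by
    have h := LinearMap.finrank_range_add_finrank_ker Dσ.mulVecLin
    rw [LinearMap.ker_eq_bot.mpr hDσinj] at h
    simp only [finrank_bot, add_zero, Module.finrank_pi, Fintype.card_fin] at h
    exact h
  have hKeq : LinearMap.range Dσ.mulVecLin = LinearMap.ker M.mulVecLin := by
    apply Submodule.eq_of_le_of_finrank_le hrange_le
    rw [hrange_fin, ker_finrank M hMrank]
  -- Poisson matrix equality
  have hP : (Matrix.of fun i j : Fin l => poisson (F i) (F j) y₀) = M * symJ n * Mᵀ := by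
    ext i j
    rw [mul_mul_transpose_apply]
    have hMi : M i = mgrad (F i) y₀ := by rw [hMrows]; rfl
    have hMj : M j = mgrad (F j) y₀ := by rw [hMrows]; rfl
    rw [hMi, hMj]
    rfl
  have hisoM : ∀ v w, M.mulVec v = 0 → M.mulVec w = 0 → v ⬝ᵥ (symJ n).mulVec w = 0 := by
    apply ker_isotropic M hMrank
    rw [← hP]
    exact hiso y₀ hy₀A
  have hcol : ∀ i, (fun k => Dσ k i) = Dσ.mulVec (Pi.single i 1) := by
    intro i; funext k
    simp [Matrix.mulVec, dotProduct, Pi.single_apply]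
  have hcolker : ∀ i, M.mulVec (Dσ.mulVec (Pi.single i 1)) = 0 := by
    intro i
    rw [Matrix.mulVec_mulVec, hMDσ, Matrix.zero_mulVec]
  refine ⟨ha, ?_, ?_⟩
  · -- gradient of H
    set g : (Fin n ⊕ Fin n) → ℝ := mgrad H y₀ with hg
    have hJg : M.mulVec ((symJ n).mulVec g) = 0 := by
      funext j
      have hMj : M j = mgrad (F j) y₀ := by rw [hMrows]; rfl
      show M j ⬝ᵥ (symJ n).mulVec g = 0
      rw [hMj]
      exact hfi j y₀ hy₀A
    have hmem : (symJ n).mulVec g ∈ LinearMap.range Dσ.mulVecLin := by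
      rw [hKeq]
      exact LinearMap.mem_ker.mpr (by simpa using hJg)
    obtain ⟨c, hc⟩ := hmem
    refine ⟨-c, ?_⟩
    simp only [Matrix.mulVecLin_apply] at hc ⊢
    rw [← Matrix.mulVec_mulVec, Matrix.mulVec_neg, hc, ← Matrix.mulVec_neg,
      Matrix.mulVec_mulVec, symJ_mul_symJ, Matrix.neg_mulVec, Matrix.one_mulVec, neg_neg]
  · -- isotropy of the image
    ext i i'
    rw [transpose_mul_mul_apply]
    show (fun k => Dσ k i) ⬝ᵥ (symJ n).mulVec (fun k => Dσ k i') = (0 : Matrix _ _ ℝ) i i'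
    rw [hcol i, hcol i']
    rw [hisoM _ _ (hcolker i) (hcolker i')]
    simp
end

section
/- Let H : ℝ^{2n} → ℝ be smooth and F_1,...,F_n : ℝ^{2n} → ℝ smooth functions that are vertically independent (for every (q,p) ∈ ℝ^{2n} the vectors ∂F_1/∂p(q,p),...,∂F_n/∂p(q,p) ∈ ℝ^n are linearly independent), pairwise in involution ({F_i,F_j} = 0 for all i,j), and first integrals of H ({F_i,H} = 0 for all i). Let π(q,p) = q and F = (F_1,...,F_n). Then the Jacobian of (π,F) : ℝ^{2n} → ℝ^n × ℝ^n is invertible at every point (so (π,F) is a local diffeomorphism), and whenever (π,F) restricts to a diffeomorphism of an open set onto an open set W ⊆ ℝ^n × ℝ^n with inverse Σ : W → ℝ^{2n}, each partial map σ_λ := Σ(·,λ) has the graph form σ_λ(q) = (q, σ̂_λ(q)) and satisfies D(H ∘ σ_λ)(q) = 0 and Dσ_λ(q)ᵀ·J·Dσ_λ(q) = 0 for all q in its domain; i.e. Σ is a local complete solution of the Hamilton–Jacobi equation for H. -/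
open Matrix

section aux
variable {n : ℕ}

lemma clm_apply_eq_sum {ι : Type*} [Fintype ι] [DecidableEq ι]
    (L : (ι → ℝ) →L[ℝ] ℝ) (w : ι → ℝ) :
    L w = ∑ s, w s * L (Pi.single s 1) := by
  have hw : w = ∑ s, (w s) • (Pi.single s 1 : ι → ℝ) := by
    funext t
    simp [Finset.sum_apply, Pi.single_apply]
  conv_lhs => rw [hw]
  rw [map_sum]
  simp

lemma dot_sum (u v : (Fin n ⊕ Fin n) → ℝ) :
    u ⬝ᵥ v = (u ∘ Sum.inl) ⬝ᵥ (v ∘ Sum.inl) + (u ∘ Sum.inr) ⬝ᵥ (v ∘ Sum.inr) := by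
  simp [dotProduct, Fintype.sum_sum_type, Function.comp]

lemma symJ_mulVec (g : (Fin n ⊕ Fin n) → ℝ) :
    (symJ n).mulVec g = Sum.elim (g ∘ Sum.inr) (-(g ∘ Sum.inl)) := by
  funext s
  cases s with
  | inl i =>
    simp [symJ, mulVec, dotProduct, Fintype.sum_sum_type, Matrix.fromBlocks_apply₁₁,
      Matrix.fromBlocks_apply₁₂, Matrix.one_apply, Finset.sum_ite_eq]
  | inr j =>
    simp [symJ, mulVec, dotProduct, Fintype.sum_sum_type, Matrix.fromBlocks_apply₂₁,
      Matrix.fromBlocks_apply₂₂, Matrix.one_apply, Finset.sum_ite_eq]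

lemma poisson_eq (f g : ((Fin n ⊕ Fin n) → ℝ) → ℝ) (x : (Fin n ⊕ Fin n) → ℝ) :
    poisson f g x =
      (mgrad f x ∘ Sum.inl) ⬝ᵥ (mgrad g x ∘ Sum.inr)
        - (mgrad f x ∘ Sum.inr) ⬝ᵥ (mgrad g x ∘ Sum.inl) := by
  rw [poisson, symJ_mulVec, dot_sum]
  simp only [Sum.elim_comp_inl, Sum.elim_comp_inr, dotProduct_neg]
  ring


lemma dp_symm_swap (C : Matrix (Fin n) (Fin n) ℝ) (hCsym : Cᵀ = C)
    (u v : Fin n → ℝ) : u ⬝ᵥ (C.mulVec v) = (C.mulVec u) ⬝ᵥ v := by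
  rw [Matrix.dotProduct_mulVec, ← Matrix.vecMul_transpose, hCsym]

lemma key_lagrangian (A B : Matrix (Fin n) (Fin n) ℝ) (hB : IsUnit B)
    (hsym : A * Bᵀ = B * Aᵀ)
    (uq up vq vp : Fin n → ℝ)
    (hu : A.mulVec uq + B.mulVec up = 0)
    (hv : A.mulVec vq + B.mulVec vp = 0) :
    uq ⬝ᵥ vp - up ⬝ᵥ vq = 0 := by
  have hdet : IsUnit B.det := (Matrix.isUnit_iff_isUnit_det B).1 hB
  have hBt : IsUnit Bᵀ := (Matrix.isUnit_transpose B).2 hB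
  have hBi : B⁻¹ * B = 1 := Matrix.nonsing_inv_mul B hdet
  have hBi' : B * B⁻¹ = 1 := Matrix.mul_nonsing_inv B hdet
  have hBti : (Bᵀ)⁻¹ * Bᵀ = 1 :=
    Matrix.nonsing_inv_mul _ (by simpa using hdet)
  set C := B⁻¹ * A with hC
  have hCsym : Cᵀ = C := by
    have h1 : B * (Cᵀ * Bᵀ) = B * (C * Bᵀ) := by
      have ht : Cᵀ = Aᵀ * (Bᵀ)⁻¹ := by
        rw [hC, Matrix.transpose_mul, Matrix.transpose_nonsing_inv]
      calc B * (Cᵀ * Bᵀ) = B * Aᵀ * ((Bᵀ)⁻¹ * Bᵀ) := by rw [ht]; simp only [mul_assoc]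
        _ = A * Bᵀ := by rw [hBti, mul_one, hsym]
        _ = (B * B⁻¹) * A * Bᵀ := by rw [hBi', one_mul]
        _ = B * (C * Bᵀ) := by rw [hC]; simp only [mul_assoc]
    have h2 : Cᵀ * Bᵀ = C * Bᵀ := hB.mul_left_cancel h1
    have h3 : (Cᵀ * Bᵀ) * (Bᵀ)⁻¹ = (C * Bᵀ) * (Bᵀ)⁻¹ := by rw [h2]
    have hBti' : Bᵀ * (Bᵀ)⁻¹ = 1 :=
      Matrix.mul_nonsing_inv _ (by simpa using hdet)
    simpa [mul_assoc, hBti'] using h3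
  have solve : ∀ wq wp : Fin n → ℝ, A.mulVec wq + B.mulVec wp = 0 →
      wp = -(C.mulVec wq) := by
    intro wq wp hw
    have h : B.mulVec wp = -(A.mulVec wq) := by
      have := eq_neg_of_add_eq_zero_right hw
      linear_combination (norm := module) this
    calc wp = (B⁻¹ * B).mulVec wp := by rw [hBi, Matrix.one_mulVec]
      _ = B⁻¹.mulVec (B.mulVec wp) := by rw [Matrix.mulVec_mulVec]
      _ = B⁻¹.mulVec (-(A.mulVec wq)) := by rw [h]
      _ = -(C.mulVec wq) := by
          rw [Matrix.mulVec_neg, hC, ← Matrix.mulVec_mulVec]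
  rw [solve uq up hu, solve vq vp hv]
  rw [dotProduct_neg, neg_dotProduct, dp_symm_swap C hCsym]
  ring

lemma key_firstintegral (A B : Matrix (Fin n) (Fin n) ℝ) (hB : IsUnit B)
    (hsym : A * Bᵀ = B * Aᵀ)
    (hq hp vq vp : Fin n → ℝ)
    (hH : A.mulVec hp = B.mulVec hq)
    (hv : A.mulVec vq + B.mulVec vp = 0) :
    hq ⬝ᵥ vq + hp ⬝ᵥ vp = 0 := by
  have hdet : IsUnit B.det := (Matrix.isUnit_iff_isUnit_det B).1 hB
  have hBi : B⁻¹ * B = 1 := Matrix.nonsing_inv_mul B hdet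
  set C := B⁻¹ * A with hC
  have hCsym : Cᵀ = C := by
    have h0 := key_lagrangian A B hB hsym
    -- reprove via same computation: easier to factor, but just redo
    have hBti : (Bᵀ)⁻¹ * Bᵀ = 1 := Matrix.nonsing_inv_mul _ (by simpa using hdet)
    have hBi' : B * B⁻¹ = 1 := Matrix.mul_nonsing_inv B hdet
    have h1 : B * (Cᵀ * Bᵀ) = B * (C * Bᵀ) := by
      have ht : Cᵀ = Aᵀ * (Bᵀ)⁻¹ := by
        rw [hC, Matrix.transpose_mul, Matrix.transpose_nonsing_inv]
      calc B * (Cᵀ * Bᵀ) = B * Aᵀ * ((Bᵀ)⁻¹ * Bᵀ) := by rw [ht]; simp only [mul_assoc]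
        _ = A * Bᵀ := by rw [hBti, mul_one, hsym]
        _ = (B * B⁻¹) * A * Bᵀ := by rw [hBi', one_mul]
        _ = B * (C * Bᵀ) := by rw [hC]; simp only [mul_assoc]
    have h2 : Cᵀ * Bᵀ = C * Bᵀ := hB.mul_left_cancel h1
    have h3 : (Cᵀ * Bᵀ) * (Bᵀ)⁻¹ = (C * Bᵀ) * (Bᵀ)⁻¹ := by rw [h2]
    have hBti' : Bᵀ * (Bᵀ)⁻¹ = 1 := Matrix.mul_nonsing_inv _ (by simpa using hdet)
    simpa [mul_assoc, hBti'] using h3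
  have hqq : hq = C.mulVec hp := by
    calc hq = (B⁻¹ * B).mulVec hq := by rw [hBi, Matrix.one_mulVec]
      _ = B⁻¹.mulVec (B.mulVec hq) := by rw [Matrix.mulVec_mulVec]
      _ = B⁻¹.mulVec (A.mulVec hp) := by rw [hH]
      _ = C.mulVec hp := by rw [hC, ← Matrix.mulVec_mulVec]
  have hvp : vp = -(C.mulVec vq) := by
    have h : B.mulVec vp = -(A.mulVec vq) := by
      have := eq_neg_of_add_eq_zero_right hv
      linear_combination (norm := module) this
    calc vp = (B⁻¹ * B).mulVec vp := by rw [hBi, Matrix.one_mulVec]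
      _ = B⁻¹.mulVec (B.mulVec vp) := by rw [Matrix.mulVec_mulVec]
      _ = B⁻¹.mulVec (-(A.mulVec vq)) := by rw [h]
      _ = -(C.mulVec vq) := by rw [Matrix.mulVec_neg, hC, ← Matrix.mulVec_mulVec]
  rw [hqq, hvp]
  rw [dotProduct_neg, dp_symm_swap C hCsym, dotProduct_comm]
  ring


lemma fderiv_apply_eq {ι : Type*} [Fintype ι] [DecidableEq ι]
    (f : (ι → ℝ) → ℝ) (x w : ι → ℝ) (hf : DifferentiableAt ℝ f x) :
    fderiv ℝ f x w = ∑ s, w s * fderiv ℝ f x (Pi.single s 1) :=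
  clm_apply_eq_sum (fderiv ℝ f x) w

/-- Given `n` vertically independent first integrals in involution, `(π,F)` is a local
diffeomorphism and each local inverse `Σ` is a local complete solution of the
Hamilton–Jacobi equation for `H`: the partial maps are graphs `σ_λ(q) = (q, σ̂_λ(q))`
satisfying `D(H∘σ_λ) = 0` and `Dσ_λᵀ·J·Dσ_λ = 0`. -/
theorem involutive_integrals_give_complete_solution
    (n : ℕ)
    (H : ((Fin n ⊕ Fin n) → ℝ) → ℝ) (hH : ContDiff ℝ (⊤ : ℕ∞) H)
    (F : Fin n → ((Fin n ⊕ Fin n) → ℝ) → ℝ) (hF : ∀ i, ContDiff ℝ (⊤ : ℕ∞) (F i))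
    (hvert : ∀ y, LinearIndependent ℝ
      (fun i => (fun j => fderiv ℝ (F i) y (Pi.single (Sum.inr j) 1) : Fin n → ℝ)))
    (hinvol : ∀ i j x, poisson (F i) (F j) x = 0)
    (hfi : ∀ i x, poisson (F i) H x = 0) :
    (∀ y, Function.Bijective (Matrix.mulVecLin
      (mjac (fun z => Sum.elim (fun i => z (Sum.inl i)) (fun j => F j z)) y))) ∧
    (∀ (Uo : Set ((Fin n ⊕ Fin n) → ℝ)) (Wo : Set ((Fin n → ℝ) × (Fin n → ℝ)))
      (S : (Fin n → ℝ) × (Fin n → ℝ) → (Fin n ⊕ Fin n) → ℝ),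
      IsOpen Uo → IsOpen Wo →
      (∀ z ∈ Uo, ((fun i => z (Sum.inl i)), (fun j => F j z)) ∈ Wo) →
      (∀ z ∈ Uo, S ((fun i => z (Sum.inl i)), (fun j => F j z)) = z) →
      (∀ w ∈ Wo, S w ∈ Uo ∧ ((fun i => S w (Sum.inl i)), (fun j => F j (S w))) = w) →
      ContDiffOn ℝ (⊤ : ℕ∞) S Wo →
      ∀ q lam, (q, lam) ∈ Wo →
        (∀ i, S (q, lam) (Sum.inl i) = q i) ∧
        fderiv ℝ (fun y => H (S (y, lam))) q = 0 ∧
        (mjac (fun y => S (y, lam)) q)ᵀ * symJ n * mjac (fun y => S (y, lam)) q = 0) := by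
  classical
  constructor
  · -- Part 1: bijectivity of the Jacobian of (π, F)
    intro y
    set Am : Matrix (Fin n) (Fin n) ℝ :=
      Matrix.of fun i k => fderiv ℝ (F i) y (Pi.single (Sum.inl k) 1) with hAm
    set Bm : Matrix (Fin n) (Fin n) ℝ :=
      Matrix.of fun i k => fderiv ℝ (F i) y (Pi.single (Sum.inr k) 1) with hBm
    have hBunit : IsUnit Bm := Matrix.linearIndependent_rows_iff_isUnit.1 (hvert y)
    set Φ : ((Fin n ⊕ Fin n) → ℝ) → ((Fin n ⊕ Fin n) → ℝ) :=
      fun z => Sum.elim (fun i => z (Sum.inl i)) (fun j => F j z) with hΦ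
    set φ : (Fin n ⊕ Fin n) → ((Fin n ⊕ Fin n) → ℝ) → ℝ :=
      Sum.elim (fun i z => z (Sum.inl i)) (fun j z => F j z) with hφ
    have hφdiff : ∀ s, DifferentiableAt ℝ (φ s) y := by
      intro s
      cases s with
      | inl i =>
        exact (ContinuousLinearMap.proj (R := ℝ) (φ := fun _ : Fin n ⊕ Fin n => ℝ)
          (Sum.inl i)).differentiableAt
      | inr j => exact ((hF j).differentiable (by simp)).differentiableAt
    have hΦeq : Φ = fun z s => φ s z := by
      funext z s; cases s <;> rfl
    have hΦfd : ∀ t s, fderiv ℝ Φ y (Pi.single t 1) s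
        = fderiv ℝ (φ s) y (Pi.single t 1) := by
      intro t s
      rw [hΦeq, fderiv_pi hφdiff]
      rfl
    have hproj : ∀ (i : Fin n) (t : Fin n ⊕ Fin n) (c : ℝ),
        fderiv ℝ (fun z : (Fin n ⊕ Fin n) → ℝ => z (Sum.inl i)) y (Pi.single t c)
          = (Pi.single t c : (Fin n ⊕ Fin n) → ℝ) (Sum.inl i) := by
      intro i t c
      have h1 : HasFDerivAt (fun z : (Fin n ⊕ Fin n) → ℝ => z (Sum.inl i))
          (ContinuousLinearMap.proj (R := ℝ) (φ := fun _ : Fin n ⊕ Fin n => ℝ)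
            (Sum.inl i)) y :=
        (ContinuousLinearMap.proj (R := ℝ) (φ := fun _ : Fin n ⊕ Fin n => ℝ)
          (Sum.inl i)).hasFDerivAt
      rw [h1.fderiv]; rfl
    have hjac : mjac Φ y = Matrix.fromBlocks 1 0 Am Bm := by
      funext s t
      cases s with
      | inl i =>
        cases t with
        | inl k =>
          show fderiv ℝ Φ y (Pi.single (Sum.inl k) 1) (Sum.inl i) = _
          rw [hΦfd]
          show fderiv ℝ (fun z : (Fin n ⊕ Fin n) → ℝ => z (Sum.inl i)) y
            (Pi.single (Sum.inl k) 1) = _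
          rw [hproj]
          simp [Matrix.one_apply, Pi.single_apply, eq_comm]
        | inr k =>
          show fderiv ℝ Φ y (Pi.single (Sum.inr k) 1) (Sum.inl i) = _
          rw [hΦfd]
          show fderiv ℝ (fun z : (Fin n ⊕ Fin n) → ℝ => z (Sum.inl i)) y
            (Pi.single (Sum.inr k) 1) = _
          rw [hproj]
          simp
      | inr j =>
        cases t with
        | inl k =>
          show fderiv ℝ Φ y (Pi.single (Sum.inl k) 1) (Sum.inr j) = _
          rw [hΦfd]
          rfl
        | inr k =>
          show fderiv ℝ Φ y (Pi.single (Sum.inr k) 1) (Sum.inr j) = _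
          rw [hΦfd]
          rfl
    have hMunit : IsUnit (mjac Φ y) := by
      rw [hjac, Matrix.isUnit_iff_isUnit_det, Matrix.det_fromBlocks_zero₁₂]
      simpa using (Matrix.isUnit_iff_isUnit_det Bm).1 hBunit
    set M := mjac Φ y with hM
    have hdet : IsUnit M.det := (Matrix.isUnit_iff_isUnit_det M).1 hMunit
    have h1 : M⁻¹ * M = 1 := Matrix.nonsing_inv_mul M hdet
    have h2 : M * M⁻¹ = 1 := Matrix.mul_nonsing_inv M hdet
    refine Function.bijective_iff_has_inverse.2 ⟨(M⁻¹).mulVecLin, ?_, ?_⟩ <;>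
      intro v <;>
      simp [Matrix.mulVecLin_apply, Matrix.mulVec_mulVec, h1, h2]
  · -- Part 2
    intro Uo Wo S hUo hWo hUW hSU hSW hS q lam hmem
    obtain ⟨hxU, hpair⟩ := hSW (q, lam) hmem
    set x := S (q, lam) with hx
    have hgraph : ∀ i, x (Sum.inl i) = q i := fun i =>
      congrFun (congrArg Prod.fst hpair) i
    -- derivative of σ := fun y => S (y, lam)
    have hSdiff : DifferentiableAt ℝ S (q, lam) :=
      (hS.contDiffAt (hWo.mem_nhds hmem)).differentiableAt (by simp)
    have hinl : HasFDerivAt (fun y : Fin n → ℝ => (y, lam))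
        (ContinuousLinearMap.inl ℝ (Fin n → ℝ) (Fin n → ℝ)) q :=
      hasFDerivAt_prodMk_left q lam
    set D := (fderiv ℝ S (q, lam)).comp
      (ContinuousLinearMap.inl ℝ (Fin n → ℝ) (Fin n → ℝ)) with hD
    have hσ : HasFDerivAt (fun y => S (y, lam)) D q :=
      hSdiff.hasFDerivAt.comp q hinl
    -- matrices at x
    set Am : Matrix (Fin n) (Fin n) ℝ :=
      Matrix.of fun i k => fderiv ℝ (F i) x (Pi.single (Sum.inl k) 1) with hAm
    set Bm : Matrix (Fin n) (Fin n) ℝ :=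
      Matrix.of fun i k => fderiv ℝ (F i) x (Pi.single (Sum.inr k) 1) with hBm
    have hBunit : IsUnit Bm := Matrix.linearIndependent_rows_iff_isUnit.1 (hvert x)
    have hsym : Am * Bmᵀ = Bm * Amᵀ := by
      ext i j
      have h := hinvol i j x
      rw [poisson_eq] at h
      simp only [Matrix.mul_apply, Matrix.transpose_apply, hAm, hBm, Matrix.of_apply]
      simp only [dotProduct, Function.comp, mgrad] at h
      have := sub_eq_zero.1 h
      rw [this]
    -- kernel fact
    have hker : ∀ v : Fin n → ℝ,
        Am.mulVec (fun k => D v (Sum.inl k)) + Bm.mulVec (fun k => D v (Sum.inr k)) = 0 := by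
      intro v
      funext j
      have hFd : DifferentiableAt ℝ (F j) x := ((hF j).differentiable (by simp)).differentiableAt
      have hchain : HasFDerivAt (fun y => F j (S (y, lam)))
          ((fderiv ℝ (F j) x).comp D) q := hFd.hasFDerivAt.comp q hσ
      have hVopen : IsOpen {y : Fin n → ℝ | (y, lam) ∈ Wo} :=
        hWo.preimage (continuous_id.prodMk continuous_const)
      have hconst : (fun y => F j (S (y, lam))) =ᶠ[nhds q] fun _ => lam j := by
        filter_upwards [hVopen.mem_nhds (show q ∈ _ from hmem)] with y hy
        exact congrFun (congrArg Prod.snd ((hSW (y, lam) hy).2)) j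
      have h0 : fderiv ℝ (fun y => F j (S (y, lam))) q = 0 := by
        rw [hconst.fderiv_eq]
        exact fderiv_const_apply _
      have hcomp0 : (fderiv ℝ (F j) x).comp D = 0 := by
        rw [← hchain.fderiv, h0]
      have hzero : fderiv ℝ (F j) x (D v) = 0 := by
        have := congrFun (congrArg DFunLike.coe hcomp0) v
        simpa using this
      have hexp : fderiv ℝ (F j) x (D v)
          = ∑ s, D v s * fderiv ℝ (F j) x (Pi.single s 1) :=
        clm_apply_eq_sum _ _
      rw [hexp, Fintype.sum_sum_type] at hzero
      simp only [Pi.add_apply, Matrix.mulVec, dotProduct, hAm, hBm, Matrix.of_apply,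
        Pi.zero_apply]
      rw [← hzero]
      congr 1 <;> exact Finset.sum_congr rfl (fun k _ => mul_comm _ _)
    refine ⟨hgraph, ?_, ?_⟩
    · -- D(H ∘ σ) = 0
      have hHd : DifferentiableAt ℝ H x := (hH.differentiable (by simp)).differentiableAt
      have hchainH : HasFDerivAt (fun y => H (S (y, lam)))
          ((fderiv ℝ H x).comp D) q := hHd.hasFDerivAt.comp q hσ
      rw [hchainH.fderiv]
      ext v
      show fderiv ℝ H x (D v) = 0
      have hexp : fderiv ℝ H x (D v)
          = ∑ s, D v s * fderiv ℝ H x (Pi.single s 1) := clm_apply_eq_sum _ _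
      set hqv : Fin n → ℝ := fun k => fderiv ℝ H x (Pi.single (Sum.inl k) 1) with hhq
      set hpv : Fin n → ℝ := fun k => fderiv ℝ H x (Pi.single (Sum.inr k) 1) with hhp
      have hHmat : Am.mulVec hpv = Bm.mulVec hqv := by
        funext i
        have h := hfi i x
        rw [poisson_eq] at h
        simp only [dotProduct, Function.comp, mgrad] at h
        have := sub_eq_zero.1 h
        simp only [Matrix.mulVec, dotProduct, hAm, hBm, Matrix.of_apply, hhq, hhp]
        exact this
      have hk := hker v
      have := key_firstintegral Am Bm hBunit hsym hqv hpv
        (fun k => D v (Sum.inl k)) (fun k => D v (Sum.inr k)) hHmat hk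
      rw [hexp, Fintype.sum_sum_type]
      rw [← this]
      simp only [dotProduct, hhq, hhp]
      congr 1 <;> exact Finset.sum_congr rfl (fun k _ => mul_comm _ _)
    · -- Lagrangian condition
      have hfd : fderiv ℝ (fun y => S (y, lam)) q = D := hσ.fderiv
      set M := mjac (fun y => S (y, lam)) q with hMdef
      have hcol : ∀ (j : Fin n) (s : Fin n ⊕ Fin n), M s j = D (Pi.single j 1) s := by
        intro j s
        show fderiv ℝ (fun y => S (y, lam)) q (Pi.single j 1) s = _
        rw [hfd]
      ext j k
      have hentry : (Mᵀ * symJ n * M) j k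
          = (fun s => M s j) ⬝ᵥ (symJ n).mulVec (fun t => M t k) := by
        rw [Matrix.mul_assoc]
        simp only [Matrix.mul_apply, Matrix.transpose_apply, dotProduct, Matrix.mulVec]
      rw [hentry, symJ_mulVec, dot_sum]
      set u : (Fin n ⊕ Fin n) → ℝ := D (Pi.single j 1) with hu
      set v : (Fin n ⊕ Fin n) → ℝ := D (Pi.single k 1) with hv
      have hcu : (fun s => M s j) = u := funext fun s => hcol j s
      have hcv : (fun t => M t k) = v := funext fun t => hcol k t
      have hlag := key_lagrangian Am Bm hBunit hsym
        (fun i => u (Sum.inl i)) (fun i => u (Sum.inr i))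
        (fun i => v (Sum.inl i)) (fun i => v (Sum.inr i)) (hker _) (hker _)
      simp only [hcu, hcv, Sum.elim_comp_inl, Sum.elim_comp_inr, dotProduct_neg,
        Matrix.zero_apply]
      simp only [dotProduct] at hlag ⊢
      simp only [Function.comp_apply]
      linarith [hlag]
end aux
end
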